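/- Let r, s be positive integers and let A be a nonnegative rs×rs matrix, written as an r×r array of s×s blocks A_{ij}, which is an (r,s)-disoriented block circulant matrix: there exists an (r,s)-block circulant matrix Ã, with the same first block row as A and with blocks Ã_{ij}, such that for every i ∈ {2,…,r} either A_{ij} = Ã_{ij} for all j, or A_{ij} = J_s·Ã_{ij} for all j. Assume moreover that (Σ_{j=1}^r A_{1j})·J_s = J_s·(Σ_{j=1}^r A_{1j}). Then the spectral radius of A equals the spectral radius of Σ_{j=1}^r A_{1j}. -/

import Mathlib

/-!
Use the `ℓ∞` operator norm, under which a nonnegative matrix has norm equal to its largest row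
sum. Put `B = ∑ⱼ A₁ⱼ`. Each block row of `A` sums to `B` or to `J B`, and `J B y = B J y = B y`
whenever `J y = y`; so on vectors `y ∘ snd` that are constant along blocks, with `J y = y`, `A`
acts as `B`, and `B` keeps such `y` fixed by `J`. Starting from `y = 1` gives
`Aⁿ 1 = (Bⁿ 1) ∘ snd`: the row sums of `Aⁿ` are those of `Bⁿ`, hence `‖Aⁿ‖ = ‖Bⁿ‖` for all `n`,
and Gelfand's formula yields equal spectral radii.
-/

/-- The spectral radius of a square real matrix: the maximum (supremum) of the
moduli of its complex eigenvalues. -/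
noncomputable def specRad {m : Type*} [Fintype m] [DecidableEq m]
    (M : Matrix m m ℝ) : ℝ :=
  sSup {x : ℝ | ∃ z ∈ spectrum ℂ (M.map (algebraMap ℝ ℂ)), ‖z‖ = x}

/-- The `(r,s)`-block circulant matrix with first block row `A 0, A 1, …, A (r-1)`:
the block in position `(i, j)` is `A (j - i)` (subtraction mod `r`). -/
def blockCirc (r s : ℕ) (A : Fin r → Matrix (Fin s) (Fin s) ℝ) :
    Matrix (Fin r × Fin s) (Fin r × Fin s) ℝ :=
  Matrix.of fun p q => A (q.1 - p.1) p.2 q.2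

/-- The `s × s` block in block-position `(i, j)` of an `rs × rs` matrix. -/
def blockOf (r s : ℕ) (M : Matrix (Fin r × Fin s) (Fin r × Fin s) ℝ)
    (i j : Fin r) : Matrix (Fin s) (Fin s) ℝ :=
  Matrix.of fun a b => M (i, a) (j, b)

/-- The `s × s` permutation matrix with ones on the anti-diagonal:
`(J_s)_{ij} = 1` iff `j = s + 1 - i` (one-indexed). -/
def Jmat (s : ℕ) : Matrix (Fin s) (Fin s) ℝ :=
  Matrix.of fun i j => if i.val + j.val + 1 = s then 1 else 0

open scoped ENNReal Matrix

attribute [local instance] Matrix.linftyOpSeminormedAddCommGroup Matrix.linftyOpNormedRing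
  Matrix.linftyOpNormedAlgebra

lemma specRad_eq_toReal_spectralRadius {m : Type*} [Fintype m] [DecidableEq m]
    (M : Matrix m m ℝ) :
    specRad M = (spectralRadius ℂ (M.map (algebraMap ℝ ℂ))).toReal := by
  have : CompleteSpace (Matrix m m ℂ) := FiniteDimensional.complete ℂ _
  set N := M.map (algebraMap ℝ ℂ)
  change sSup {x : ℝ | ∃ z ∈ spectrum ℂ N, ‖z‖ = x} = _
  rcases (spectrum ℂ N).eq_empty_or_nonempty with hσ | hσ
  · simp [hσ, spectralRadius]
  obtain ⟨z, hz, hzρ⟩ := spectrum.exists_nnnorm_eq_spectralRadius_of_nonempty hσ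
  have hmax : IsGreatest {x : ℝ | ∃ w ∈ spectrum ℂ N, ‖w‖ = x} ‖z‖ := by
    refine ⟨⟨z, hz, rfl⟩, ?_⟩
    rintro _ ⟨w, hw, rfl⟩
    have : (‖w‖₊ : ℝ≥0∞) ≤ ‖z‖₊ := hzρ ▸ le_iSup₂ (α := ℝ≥0∞) w hw
    exact_mod_cast this
  rw [hmax.csSup_eq, ← hzρ]
  rfl

lemma spectralRadius_eq_of_forall_nnnorm_pow_eq {A B : Type*}
    [NormedRing A] [NormedAlgebra ℂ A] [CompleteSpace A]
    [NormedRing B] [NormedAlgebra ℂ B] [CompleteSpace B] {a : A} {b : B}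
    (h : ∀ n : ℕ, ‖a ^ n‖₊ = ‖b ^ n‖₊) : spectralRadius ℂ a = spectralRadius ℂ b := by
  refine tendsto_nhds_unique ?_ (spectrum.gelfand_formula b)
  simpa only [h] using spectrum.gelfand_formula a

lemma Matrix.linfty_opNNNorm_eq_of_rowSum_eq_comp {l m n o α : Type*} [Fintype l] [Fintype m]
    [Fintype n] [Fintype o] [SeminormedAddCommGroup α] {M : Matrix l m α} {N : Matrix n o α}
    {f : l → n} (hf : f.Surjective) (h : ∀ i, ∑ j, ‖M i j‖₊ = ∑ j, ‖N (f i) j‖₊) :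
    ‖M‖₊ = ‖N‖₊ := by
  classical
  rw [linfty_opNNNorm_def, linfty_opNNNorm_def, ← Finset.image_univ_of_surjective hf,
    Finset.sup_image]
  exact Finset.sup_congr rfl fun i _ => h i

lemma nnnorm_map_ofReal_eq_of_rowSum_eq_comp {l m n o : Type*} [Fintype l] [Fintype m]
    [Fintype n] [Fintype o] {M : Matrix l m ℝ} {N : Matrix n o ℝ}
    (hM : ∀ i j, 0 ≤ M i j) (hN : ∀ i j, 0 ≤ N i j) {f : l → n} (hf : f.Surjective)
    (h : ∀ i, ∑ j, M i j = ∑ j, N (f i) j) :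
    ‖M.map (algebraMap ℝ ℂ)‖₊ = ‖N.map (algebraMap ℝ ℂ)‖₊ := by
  refine Matrix.linfty_opNNNorm_eq_of_rowSum_eq_comp hf fun i => NNReal.coe_injective ?_
  simpa [Complex.norm_real, abs_of_nonneg (hM _ _), abs_of_nonneg (hN _ _)] using h i

lemma Matrix.pow_mulVec_comp_of_mulVec_comp {m n R : Type*} [Fintype m] [DecidableEq m]
    [Fintype n] [DecidableEq n] [Semiring R] {A : Matrix m m R} {B : Matrix n n R} {g : m → n}
    {S : Set (n → R)} (hB : ∀ y ∈ S, B *ᵥ y ∈ S) (hA : ∀ y ∈ S, A *ᵥ (y ∘ g) = (B *ᵥ y) ∘ g)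
    (k : ℕ) {y : n → R} (hy : y ∈ S) : A ^ k *ᵥ (y ∘ g) = (B ^ k *ᵥ y) ∘ g := by
  induction k generalizing y with
  | zero => simp
  | succ k ih =>
    rw [pow_succ, pow_succ, ← mulVec_mulVec, hA y hy, ih (hB y hy), mulVec_mulVec]

lemma Jmat_apply (s : ℕ) (a b : Fin s) : Jmat s a b = if b = a.rev then 1 else 0 := by
  simp only [Jmat, Matrix.of_apply, Fin.ext_iff, Fin.val_rev]
  congr 1
  exact propext (by omega)

lemma Jmat_mulVec_one (s : ℕ) : Jmat s *ᵥ 1 = 1 := by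
  ext a
  simp [Matrix.mulVec, dotProduct, Jmat_apply]

lemma sum_blockOf_blockCirc {r s : ℕ} [NeZero r] (X : Fin r → Matrix (Fin s) (Fin s) ℝ)
    (i : Fin r) :
    ∑ j, blockOf r s (blockCirc r s X) i j = ∑ j, X j :=
  Fintype.sum_equiv (Equiv.subRight i) _ _ fun _ => rfl

lemma mulVec_comp_snd {r s : ℕ} (A : Matrix (Fin r × Fin s) (Fin r × Fin s) ℝ)
    (y : Fin s → ℝ) : A *ᵥ (y ∘ Prod.snd) = fun p => ((∑ j, blockOf r s A p.1 j) *ᵥ y) p.2 := by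
  ext ⟨i, a⟩
  simp only [Matrix.mulVec, dotProduct, Fintype.sum_prod_type, Matrix.sum_apply,
    Finset.sum_mul]
  exact Finset.sum_comm

lemma sum_blockOf_eq_or_eq_mul {r s : ℕ} [NeZero r]
    {A : Matrix (Fin r × Fin s) (Fin r × Fin s) ℝ}
    {X : Fin r → Matrix (Fin s) (Fin s) ℝ} {P : Matrix (Fin s) (Fin s) ℝ} {i : Fin r}
    (h : (∀ j, blockOf r s A i j = blockOf r s (blockCirc r s X) i j) ∨
      (∀ j, blockOf r s A i j = P * blockOf r s (blockCirc r s X) i j)) :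
    ∑ j, blockOf r s A i j = ∑ j, X j ∨ ∑ j, blockOf r s A i j = P * ∑ j, X j := by
  refine h.imp (fun h => ?_) (fun h => ?_) <;>
    simp only [h, ← Finset.mul_sum, sum_blockOf_blockCirc]

lemma mulVec_comp_snd_eq_of_sum_blockOf {r s : ℕ}
    {A : Matrix (Fin r × Fin s) (Fin r × Fin s) ℝ} {B P : Matrix (Fin s) (Fin s) ℝ}
    (hrow : ∀ i, ∑ j, blockOf r s A i j = B ∨ ∑ j, blockOf r s A i j = P * B)
    {y : Fin s → ℝ} (hy : P *ᵥ (B *ᵥ y) = B *ᵥ y) :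
    A *ᵥ (y ∘ Prod.snd) = (B *ᵥ y) ∘ Prod.snd := by
  rw [mulVec_comp_snd]
  ext ⟨i, a⟩
  rcases hrow i with h | h
  · rw [h]; rfl
  · rw [h, ← Matrix.mulVec_mulVec, hy]; rfl

theorem stmt3_general (r s : ℕ) (hr : 0 < r)
    (A : Matrix (Fin r × Fin s) (Fin r × Fin s) ℝ)
    (hA : ∀ p q, 0 ≤ A p q)
    -- `A` is an `(r,s)`-disoriented block circulant matrix: the block circulant
    -- matrix `Ã` built from the first block row of `A` is such that every block
    -- row of `A` equals the corresponding block row of `Ã`, or is obtained from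
    -- it by pre-multiplying each block by `J_s`:
    (hdis : ∀ i : Fin r, i ≠ ⟨0, hr⟩ →
      (∀ j, blockOf r s A i j =
        blockOf r s (blockCirc r s (blockOf r s A ⟨0, hr⟩)) i j) ∨
      (∀ j, blockOf r s A i j =
        Jmat s * blockOf r s (blockCirc r s (blockOf r s A ⟨0, hr⟩)) i j))
    (hcomm : (∑ j, blockOf r s A ⟨0, hr⟩ j) * Jmat s
        = Jmat s * (∑ j, blockOf r s A ⟨0, hr⟩ j)) :
    specRad A = specRad (∑ j, blockOf r s A ⟨0, hr⟩ j) := by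
  have : NeZero r := ⟨hr.ne'⟩
  set B := ∑ j, blockOf r s A ⟨0, hr⟩ j
  have hrow : ∀ i, ∑ j, blockOf r s A i j = B ∨ ∑ j, blockOf r s A i j = Jmat s * B := by
    intro i
    by_cases hi : i = ⟨0, hr⟩
    · exact .inl (hi ▸ rfl)
    · exact sum_blockOf_eq_or_eq_mul (hdis i hi)
  have hB : ∀ a b, 0 ≤ B a b := fun a b => by
    simp only [B, Matrix.sum_apply]
    exact Finset.sum_nonneg fun j _ => hA _ _
  have hJB : ∀ y, Jmat s *ᵥ y = y → Jmat s *ᵥ (B *ᵥ y) = B *ᵥ y := fun y hy => by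
    rw [Matrix.mulVec_mulVec, ← hcomm, ← Matrix.mulVec_mulVec, hy]
  have hAB : ∀ y, Jmat s *ᵥ y = y → A *ᵥ (y ∘ Prod.snd) = (B *ᵥ y) ∘ Prod.snd :=
    fun y hy => mulVec_comp_snd_eq_of_sum_blockOf hrow (hJB y hy)
  rw [specRad_eq_toReal_spectralRadius, specRad_eq_toReal_spectralRadius]
  congr 1
  refine spectralRadius_eq_of_forall_nnnorm_pow_eq fun n => ?_
  rw [← Matrix.map_pow, ← Matrix.map_pow]
  refine nnnorm_map_ofReal_eq_of_rowSum_eq_comp (Matrix.pow_apply_nonneg hA n)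
    (Matrix.pow_apply_nonneg hB n) Prod.snd_surjective fun p => ?_
  simpa [Matrix.mulVec, dotProduct] using
    congrFun (Matrix.pow_mulVec_comp_of_mulVec_comp (S := {y | Jmat s *ᵥ y = y}) hJB hAB n
      (Jmat_mulVec_one s)) p

theorem stmt3 (r s : ℕ) (hr : 0 < r) (hs : 0 < s)
    (A : Matrix (Fin r × Fin s) (Fin r × Fin s) ℝ)
    (hA : ∀ p q, 0 ≤ A p q)
    -- `A` is an `(r,s)`-disoriented block circulant matrix: the block circulant
    -- matrix `Ã` built from the first block row of `A` is such that every block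
    -- row of `A` equals the corresponding block row of `Ã`, or is obtained from
    -- it by pre-multiplying each block by `J_s`:
    (hdis : ∀ i : Fin r, i ≠ ⟨0, hr⟩ →
      (∀ j, blockOf r s A i j =
        blockOf r s (blockCirc r s (blockOf r s A ⟨0, hr⟩)) i j) ∨
      (∀ j, blockOf r s A i j =
        Jmat s * blockOf r s (blockCirc r s (blockOf r s A ⟨0, hr⟩)) i j))
    (hcomm : (∑ j, blockOf r s A ⟨0, hr⟩ j) * Jmat s
        = Jmat s * (∑ j, blockOf r s A ⟨0, hr⟩ j)) :
    specRad A = specRad (∑ j, blockOf r s A ⟨0, hr⟩ j) :=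
  stmt3_general r s hr A hA hdis hcomm
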